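/- arXiv:2311.02838 — 2 statements merged into one kernel-verified Lean document; each statement's English description precedes it below -/
import Mathlib

section
/- The Barron functional ‖·‖_{B_1} is a norm on the Barron space B_1: (i) for f ∈ B_1, ‖f‖_{B_1} = 0 if and only if f is the zero function on Ω; (ii) ‖αf‖_{B_1} = |α| · ‖f‖_{B_1} for every f ∈ B_1 and α ∈ ℝ; (iii) ‖f + g‖_{B_1} ≤ ‖f‖_{B_1} + ‖g‖_{B_1} for all f, g ∈ B_1. -/
open MeasureTheory ENNReal

noncomputable section

abbrev Vec (N : ℕ) := Fin N → ℝ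

abbrev Param (N : ℕ) := Vec N × Vec N × Vec N

/-- componentwise ReLU -/
def relu {N : ℕ} (x : Vec N) : Vec N := fun i => max (x i) 0

/-- graph convolution defined via the orthogonal matrix `U` -/
def conv {N : ℕ} (U : Matrix (Fin N) (Fin N) ℝ) (b x : Vec N) : Vec N :=
  U.mulVec (U.transpose.mulVec b * U.transpose.mulVec x)

/-- The data and standing assumptions of the graph Barron space setting. -/
structure Setting (N : ℕ) where
  U : Matrix (Fin N) (Fin N) ℝ
  W : Submodule ℝ (Vec N)
  dom : Set (Vec N)
  nrm : Vec N → ℝ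
  conorm : Vec N → ℝ
  hN : 1 ≤ N
  hU : U.transpose * U = 1
  hdomc : IsCompact dom
  hdomne : dom.Nonempty
  nrm_add : ∀ x y, nrm (x + y) ≤ nrm x + nrm y
  nrm_smul : ∀ (t : ℝ) (x), nrm (t • x) = |t| * nrm x
  nrm_eq_zero : ∀ x, nrm x = 0 ↔ x = 0
  relu_nrm_le : ∀ x, nrm (relu x) ≤ nrm x
  conorm_add : ∀ b b', b ∈ W → b' ∈ W → conorm (b + b') ≤ conorm b + conorm b'
  conorm_smul : ∀ (t : ℝ) (b), b ∈ W → conorm (t • b) = |t| * conorm b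
  conorm_eq_zero : ∀ b, b ∈ W → (conorm b = 0 ↔ b = 0)
  conv_nrm_le : ∀ b ∈ W, ∀ x ∈ dom, nrm (conv U b x) ≤ conorm b

namespace Setting

variable {N : ℕ} (S : Setting N)

/-- dual norm `‖a‖_* = sup {aᵀx : ‖x‖ ≤ 1}` -/
def dual (a : Vec N) : ℝ :=
  sSup {t : ℝ | ∃ x : Vec N, S.nrm x ≤ 1 ∧ t = ∑ i, a i * x i}

/-- the neuron `aᵀ σ(b*x + c)` -/
def neuron (x : Vec N) (p : Param N) : ℝ :=
  ∑ i, p.1 i * relu (conv S.U p.2.1 x + p.2.2) i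

/-- `P_f`: probability measures on `ℝ^N × W × ℝ^N` representing `f` on `Ω`. -/
def reps (f : Vec N → ℝ) : Set (Measure (Param N)) :=
  {ρ | IsProbabilityMeasure ρ ∧ ρ {p : Param N | p.2.1 ∉ S.W} = 0 ∧
    ∀ x ∈ S.dom, Integrable (S.neuron x) ρ ∧ f x = ∫ p, S.neuron x p ∂ρ}

/-- the weight `‖a‖_* (‖b‖_co + ‖c‖)` -/
def weight (p : Param N) : ℝ := S.dual p.1 * (S.conorm p.2.1 + S.nrm p.2.2)

def cost (ρ : Measure (Param N)) : ℝ≥0∞ :=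
  ∫⁻ p, ENNReal.ofReal (S.weight p) ∂ρ

/-- the Barron norm `‖f‖_{B_1} ∈ [0,∞]` -/
def barron (f : Vec N → ℝ) : ℝ≥0∞ :=
  ⨅ ρ ∈ S.reps f, S.cost ρ

/-- membership in the Barron space `B = B_1` -/
def memB (f : Vec N → ℝ) : Prop :=
  (S.reps f).Nonempty ∧ S.barron f < ⊤

/-- `(a,b,c)` lies in `S × T` -/
def onST (p : Param N) : Prop :=
  S.dual p.1 = 1 ∧ p.2.1 ∈ S.W ∧ S.conorm p.2.1 + S.nrm p.2.2 = 1

/-- output of the shallow GCNN with parameters `θ` -/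
def netOut {M : ℕ} (θ : Fin M → Param N) (x : Vec N) : ℝ :=
  (M : ℝ)⁻¹ * ∑ m, S.neuron x (θ m)

/-- the `p`-path norm, `1 ≤ p ≤ ∞` -/
def pathNorm {M : ℕ} (p : ℝ≥0∞) (θ : Fin M → Param N) : ℝ :=
  if p = ⊤ then ⨆ m, S.weight (θ m)
  else ((M : ℝ)⁻¹ * ∑ m, S.weight (θ m) ^ p.toReal) ^ (p.toReal)⁻¹

/-- the class `C_{Q,p}` of GCNN outputs with `p`-path norm at most `Q` -/
def CQp (Q : ℝ) (p : ℝ≥0∞) : Set (Vec N → ℝ) :=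
  {g | ∃ M : ℕ, 1 ≤ M ∧ ∃ θ : Fin M → Param N,
    (∀ m, (θ m).2.1 ∈ S.W) ∧ S.pathNorm p θ ≤ Q ∧ ∀ x ∈ S.dom, g x = S.netOut θ x}

end Setting

namespace Setting

variable {N : ℕ} (S : Setting N)

lemma nrm_zero : S.nrm 0 = 0 := (S.nrm_eq_zero 0).2 rfl

lemma nrm_neg (x : Vec N) : S.nrm (-x) = S.nrm x := by
  have h := S.nrm_smul (-1) x
  rw [neg_one_smul] at h
  simpa using h

lemma nrm_nonneg (x : Vec N) : 0 ≤ S.nrm x := by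
  have h := S.nrm_add x (-x)
  rw [add_neg_cancel, S.nrm_zero, S.nrm_neg] at h
  linarith

lemma conorm_zero : S.conorm 0 = 0 := (S.conorm_eq_zero 0 S.W.zero_mem).2 rfl

lemma conorm_neg {b : Vec N} (hb : b ∈ S.W) : S.conorm (-b) = S.conorm b := by
  have h := S.conorm_smul (-1) b hb
  rw [neg_one_smul] at h
  simpa using h

lemma conorm_nonneg {b : Vec N} (hb : b ∈ S.W) : 0 ≤ S.conorm b := by
  have h := S.conorm_add b (-b) hb (S.W.neg_mem hb)
  rw [add_neg_cancel, S.conorm_zero, S.conorm_neg hb] at h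
  linarith

lemma nrm_sum_le {ι : Type*} (s : Finset ι) (f : ι → Vec N) :
    S.nrm (∑ i ∈ s, f i) ≤ ∑ i ∈ s, S.nrm (f i) := by
  classical
  induction s using Finset.induction with
  | empty => simp [S.nrm_zero]
  | insert _ _ h ih =>
    rw [Finset.sum_insert h, Finset.sum_insert h]
    exact (S.nrm_add _ _).trans (by linarith)

lemma nrm_le_K : ∃ K : ℝ, 0 ≤ K ∧ ∀ x : Vec N, S.nrm x ≤ K * ‖x‖ := by
  refine ⟨∑ i, S.nrm (Pi.single i 1), Finset.sum_nonneg fun i _ => S.nrm_nonneg _, fun x => ?_⟩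
  have hx : (∑ i, x i • (Pi.single i 1 : Vec N)) = x := by
    have h1 : ∀ i : Fin N, x i • (Pi.single i 1 : Vec N) = Pi.single i (x i) := by
      intro i; ext j; by_cases h : j = i <;> simp [h, Pi.single_apply]
    simp_rw [h1]
    exact Finset.univ_sum_single x
  calc S.nrm x = S.nrm (∑ i, x i • (Pi.single i 1 : Vec N)) := by rw [hx]
    _ ≤ ∑ i, S.nrm (x i • (Pi.single i 1 : Vec N)) := S.nrm_sum_le _ _
    _ ≤ ∑ i, ‖x‖ * S.nrm (Pi.single i 1) := by
        refine Finset.sum_le_sum fun i _ => ?_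
        rw [S.nrm_smul]
        refine mul_le_mul_of_nonneg_right ?_ (S.nrm_nonneg _)
        simpa [Real.norm_eq_abs] using norm_le_pi_norm x i
    _ = (∑ i, S.nrm (Pi.single i 1)) * ‖x‖ := by rw [← Finset.mul_sum, mul_comm]

lemma continuous_nrm : Continuous S.nrm := by
  obtain ⟨K, hK0, hK⟩ := S.nrm_le_K
  have lip : ∀ x y : Vec N, |S.nrm x - S.nrm y| ≤ K * ‖x - y‖ := by
    intro x y
    have h1 := S.nrm_add (x - y) y
    rw [sub_add_cancel] at h1
    have h2 := S.nrm_add (y - x) x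
    rw [sub_add_cancel] at h2
    have h3 : S.nrm (y - x) = S.nrm (x - y) := by rw [← S.nrm_neg (x - y), neg_sub]
    have h4 := hK (x - y)
    rw [abs_le]; constructor <;> [linarith; linarith]
  have : LipschitzWith (Real.toNNReal K) S.nrm := by
    refine LipschitzWith.of_dist_le_mul fun x y => ?_
    rw [Real.dist_eq, dist_eq_norm, Real.coe_toNNReal K hK0]
    exact lip x y
  exact this.continuous

lemma exists_nrm_lower : ∃ C : ℝ, 0 ≤ C ∧ ∀ x : Vec N, ‖x‖ ≤ C * S.nrm x := by
  have hne : (Metric.sphere (0 : Vec N) 1).Nonempty := by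
    haveI : Nonempty (Fin N) := Fin.pos_iff_nonempty.mp S.hN
    refine ⟨fun _ => 1, ?_⟩
    simp [Metric.mem_sphere, dist_zero_right]
  obtain ⟨z, hz, hmin⟩ :=
    (isCompact_sphere (0 : Vec N) 1).exists_isMinOn hne S.continuous_nrm.continuousOn
  have hz1 : ‖z‖ = 1 := by simpa [dist_zero_right] using hz
  have hzne : z ≠ 0 := by intro h; rw [h] at hz1; simp at hz1
  have hm : 0 < S.nrm z :=
    lt_of_le_of_ne (S.nrm_nonneg z) fun h => hzne ((S.nrm_eq_zero z).1 h.symm)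
  refine ⟨(S.nrm z)⁻¹, inv_nonneg.2 hm.le, fun x => ?_⟩
  rcases eq_or_ne x 0 with rfl | hx
  · simp [S.nrm_zero]
  · have hnx : 0 < ‖x‖ := norm_pos_iff.2 hx
    have hu : (‖x‖⁻¹ • x) ∈ Metric.sphere (0 : Vec N) 1 := by
      simp [dist_zero_right, norm_smul, abs_of_pos (inv_pos.2 hnx), inv_mul_cancel₀ hnx.ne']
    have h5 : S.nrm z ≤ S.nrm (‖x‖⁻¹ • x) := isMinOn_iff.mp hmin _ hu
    rw [S.nrm_smul, abs_of_pos (inv_pos.2 hnx)] at h5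
    have h6 := mul_le_mul_of_nonneg_left h5 hnx.le
    rw [← mul_assoc, mul_inv_cancel₀ hnx.ne', one_mul] at h6
    rw [inv_mul_eq_div, le_div_iff₀ hm]
    linarith

lemma zero_mem_dualSet (a : Vec N) :
    (0 : ℝ) ∈ {t : ℝ | ∃ x : Vec N, S.nrm x ≤ 1 ∧ t = ∑ i, a i * x i} :=
  ⟨0, by simp [S.nrm_zero], by simp⟩

lemma bddAbove_dualSet (a : Vec N) :
    BddAbove {t : ℝ | ∃ x : Vec N, S.nrm x ≤ 1 ∧ t = ∑ i, a i * x i} := by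
  obtain ⟨C, hC0, hC⟩ := S.exists_nrm_lower
  refine ⟨∑ i, |a i| * C, ?_⟩
  rintro t ⟨x, hx, rfl⟩
  refine Finset.sum_le_sum fun i _ => ?_
  have h1 : |x i| ≤ C := by
    have h2 : ‖x i‖ ≤ ‖x‖ := norm_le_pi_norm x i
    have h3 := hC x
    have h4 : C * S.nrm x ≤ C * 1 := mul_le_mul_of_nonneg_left hx hC0
    rw [Real.norm_eq_abs] at h2
    linarith
  calc a i * x i ≤ |a i * x i| := le_abs_self _
    _ = |a i| * |x i| := abs_mul _ _
    _ ≤ |a i| * C := mul_le_mul_of_nonneg_left h1 (abs_nonneg _)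

lemma dual_nonneg (a : Vec N) : 0 ≤ S.dual a :=
  le_csSup (S.bddAbove_dualSet a) (S.zero_mem_dualSet a)

lemma sum_le_dual {a x : Vec N} (hx : S.nrm x ≤ 1) : ∑ i, a i * x i ≤ S.dual a :=
  le_csSup (S.bddAbove_dualSet a) ⟨x, hx, rfl⟩

lemma sum_le_dual_mul (a y : Vec N) : ∑ i, a i * y i ≤ S.dual a * S.nrm y := by
  rcases eq_or_ne y 0 with rfl | hy
  · simp [S.nrm_zero]
  · have hm : 0 < S.nrm y :=
      lt_of_le_of_ne (S.nrm_nonneg y) fun h => hy ((S.nrm_eq_zero y).1 h.symm)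
    have h : ∑ i, a i * ((S.nrm y)⁻¹ • y) i ≤ S.dual a := by
      refine S.sum_le_dual ?_
      rw [S.nrm_smul, abs_of_pos (inv_pos.2 hm), inv_mul_cancel₀ hm.ne']
    have he : ∑ i, a i * ((S.nrm y)⁻¹ • y) i = (S.nrm y)⁻¹ * ∑ i, a i * y i := by
      rw [Finset.mul_sum]
      refine Finset.sum_congr rfl fun i _ => ?_
      simp only [Pi.smul_apply, smul_eq_mul]; ring
    rw [he] at h
    have h2 := mul_le_mul_of_nonneg_left h hm.le
    rw [← mul_assoc, mul_inv_cancel₀ hm.ne', one_mul] at h2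
    linarith [h2]

lemma abs_sum_le_dual_mul (a y : Vec N) : |∑ i, a i * y i| ≤ S.dual a * S.nrm y := by
  rw [abs_le]
  constructor
  · have h := S.sum_le_dual_mul a (-y)
    rw [S.nrm_neg] at h
    have he : ∑ i, a i * (-y) i = -∑ i, a i * y i := by
      rw [← Finset.sum_neg_distrib]
      exact Finset.sum_congr rfl fun i _ => by simp
    rw [he] at h
    linarith
  · exact S.sum_le_dual_mul a y

lemma dual_neg (a : Vec N) : S.dual (-a) = S.dual a := by
  have hset : {t : ℝ | ∃ x : Vec N, S.nrm x ≤ 1 ∧ t = ∑ i, (-a) i * x i} =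
      {t : ℝ | ∃ x : Vec N, S.nrm x ≤ 1 ∧ t = ∑ i, a i * x i} := by
    ext t
    constructor
    · rintro ⟨x, hx, rfl⟩
      refine ⟨-x, by rw [S.nrm_neg]; exact hx, ?_⟩
      exact Finset.sum_congr rfl fun i _ => by simp
    · rintro ⟨x, hx, rfl⟩
      refine ⟨-x, by rw [S.nrm_neg]; exact hx, ?_⟩
      exact Finset.sum_congr rfl fun i _ => by simp
  rw [dual, dual, hset]

lemma abs_neuron_le_weight {x : Vec N} (hx : x ∈ S.dom) {p : Param N} (hb : p.2.1 ∈ S.W) :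
    |S.neuron x p| ≤ S.weight p := by
  obtain ⟨a, b, c⟩ := p
  have h1 : |S.neuron x (a, b, c)| ≤ S.dual a * S.nrm (relu (conv S.U b x + c)) :=
    S.abs_sum_le_dual_mul a _
  have h2 : S.nrm (relu (conv S.U b x + c)) ≤ S.conorm b + S.nrm c := by
    refine (S.relu_nrm_le _).trans ((S.nrm_add _ _).trans ?_)
    linarith [S.conv_nrm_le b hb x hx]
  exact h1.trans (mul_le_mul_of_nonneg_left h2 (S.dual_nonneg a))

lemma weight_nonneg {p : Param N} (hb : p.2.1 ∈ S.W) : 0 ≤ S.weight p :=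
  mul_nonneg (S.dual_nonneg _) (add_nonneg (S.conorm_nonneg hb) (S.nrm_nonneg _))

lemma continuous_neuron (x : Vec N) : Continuous fun p : Param N => S.neuron x p := by
  unfold neuron relu conv Matrix.mulVec dotProduct
  fun_prop

lemma measurableSet_bad : MeasurableSet {p : Param N | p.2.1 ∉ S.W} := by
  have hW : IsClosed (S.W : Set (Vec N)) := Submodule.closed_of_finiteDimensional S.W
  exact (measurable_fst.comp measurable_snd) hW.measurableSet.compl

lemma ae_mem_W {ρ : Measure (Param N)} (h : ρ {p : Param N | p.2.1 ∉ S.W} = 0) :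
    ∀ᵐ p ∂ρ, p.2.1 ∈ S.W := by
  rw [MeasureTheory.ae_iff]
  exact h

end Setting

namespace Setting

variable {N : ℕ} (S : Setting N)

/-- scaling map on parameters -/
def smap (s t : ℝ) (p : Param N) : Param N := (s • p.1, t • p.2.1, t • p.2.2)

lemma continuous_smap (s t : ℝ) : Continuous (smap (N := N) s t) := by
  unfold smap; fun_prop

lemma measurable_smap (s t : ℝ) : Measurable (smap (N := N) s t) :=
  (continuous_smap s t).measurable

lemma conv_smul (t : ℝ) (b x : Vec N) : conv S.U (t • b) x = t • conv S.U b x := by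
  simp [conv, Matrix.mulVec_smul, smul_mul_assoc]

lemma relu_smul {t : ℝ} (ht : 0 ≤ t) (v : Vec N) : relu (t • v) = t • relu v := by
  funext i
  simp only [relu, Pi.smul_apply, smul_eq_mul]
  rw [mul_max_of_nonneg _ _ ht, mul_zero]

lemma neuron_smap (x : Vec N) {t : ℝ} (ht : 0 ≤ t) (s : ℝ) (p : Param N) :
    S.neuron x (smap s t p) = (s * t) * S.neuron x p := by
  obtain ⟨a, b, c⟩ := p
  simp only [neuron, smap]
  rw [S.conv_smul, ← smul_add, relu_smul ht, Finset.mul_sum]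
  refine Finset.sum_congr rfl fun i _ => ?_
  simp only [Pi.smul_apply, smul_eq_mul]
  ring

lemma weight_smap {t : ℝ} (ht : 0 ≤ t) {s : ℝ} (hs : s = 1 ∨ s = -1) {p : Param N}
    (hb : p.2.1 ∈ S.W) : S.weight (smap s t p) = t * S.weight p := by
  obtain ⟨a, b, c⟩ := p
  have hd : S.dual (s • a) = S.dual a := by
    rcases hs with rfl | rfl
    · rw [one_smul]
    · rw [neg_smul, one_smul]
      exact S.dual_neg a
  simp only [weight, smap]
  rw [hd, S.conorm_smul t b hb, S.nrm_smul, abs_of_nonneg ht]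
  ring

lemma map_smap_mem_reps {f : Vec N → ℝ} {ρ : Measure (Param N)} (hρ : ρ ∈ S.reps f)
    {s t : ℝ} (hs : s = 1 ∨ s = -1) (ht : 0 < t) :
    Measure.map (smap s t) ρ ∈ S.reps (fun x => (s * t) * f x) ∧
    S.cost (Measure.map (smap s t) ρ) ≤ ENNReal.ofReal t * S.cost ρ := by
  obtain ⟨hprob, hbad, hrep⟩ := hρ
  haveI := hprob
  have hT : Measurable (smap (N := N) s t) := measurable_smap s t
  have hpre : smap s t ⁻¹' {p : Param N | p.2.1 ∉ S.W} = {p : Param N | p.2.1 ∉ S.W} := by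
    ext p
    simp only [Set.mem_preimage, Set.mem_setOf_eq, smap]
    exact not_congr (S.W.smul_mem_iff ht.ne')
  constructor
  · refine ⟨Measure.isProbabilityMeasure_map hT.aemeasurable, ?_, fun x hx => ?_⟩
    · rw [Measure.map_apply hT S.measurableSet_bad, hpre]
      exact hbad
    · have hcont := S.continuous_neuron x
      have hco : (S.neuron x ∘ smap s t) = fun p => (s * t) * S.neuron x p :=
        funext fun p => S.neuron_smap x ht.le s p
      have hint : Integrable (S.neuron x ∘ smap s t) ρ := by
        rw [hco]
        exact ((hrep x hx).1).const_mul _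
      refine ⟨(integrable_map_measure hcont.aestronglyMeasurable hT.aemeasurable).2 hint, ?_⟩
      rw [integral_map hT.aemeasurable hcont.aestronglyMeasurable]
      have : ∫ p, S.neuron x (smap s t p) ∂ρ = ∫ p, (s * t) * S.neuron x p ∂ρ := by
        refine integral_congr_ae (Filter.Eventually.of_forall fun p => ?_)
        exact S.neuron_smap x ht.le s p
      rw [this, integral_const_mul, ← (hrep x hx).2]
  · calc S.cost (Measure.map (smap s t) ρ)
        ≤ ∫⁻ p, ENNReal.ofReal (S.weight (smap s t p)) ∂ρ :=
          lintegral_map_le _ _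
      _ = ∫⁻ p, ENNReal.ofReal t * ENNReal.ofReal (S.weight p) ∂ρ := by
          refine lintegral_congr_ae ?_
          filter_upwards [S.ae_mem_W hbad] with p hp
          rw [S.weight_smap ht.le hs hp, ENNReal.ofReal_mul ht.le]
      _ = ENNReal.ofReal t * S.cost ρ := lintegral_const_mul' _ _ ENNReal.ofReal_ne_top

lemma barron_eq_zero_of {f : Vec N → ℝ} (hf : ∀ x ∈ S.dom, f x = 0) : S.barron f = 0 := by
  have hd : (Measure.dirac ((0, 0, 0) : Param N)) ∈ S.reps f := by
    refine ⟨by infer_instance, ?_, fun x hx => ?_⟩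
    · rw [Measure.dirac_apply' _ S.measurableSet_bad]
      simp [S.W.zero_mem]
    · have hn : S.neuron x ((0, 0, 0) : Param N) = 0 := by simp [neuron]
      refine ⟨(integrable_const (S.neuron x ((0, 0, 0) : Param N))).congr
        (ae_eq_dirac (S.neuron x)).symm, ?_⟩
      rw [integral_dirac, hn, hf x hx]
  have hc : S.cost (Measure.dirac ((0, 0, 0) : Param N)) = 0 := by
    have : S.cost (Measure.dirac ((0, 0, 0) : Param N)) =
        ENNReal.ofReal (S.weight ((0, 0, 0) : Param N)) := lintegral_dirac _ _
    rw [this]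
    have hw : S.weight ((0, 0, 0) : Param N) = 0 := by
      simp [weight, S.conorm_zero, S.nrm_zero]
    rw [hw, ENNReal.ofReal_zero]
  have hle : S.barron f ≤ S.cost (Measure.dirac ((0, 0, 0) : Param N)) := iInf₂_le _ hd
  rw [hc] at hle
  exact le_antisymm hle bot_le

lemma ofReal_abs_le_cost {f : Vec N → ℝ} {ρ : Measure (Param N)} (hρ : ρ ∈ S.reps f)
    {x : Vec N} (hx : x ∈ S.dom) : ENNReal.ofReal |f x| ≤ S.cost ρ := by
  obtain ⟨hprob, hbad, hrep⟩ := hρ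
  obtain ⟨hint, heq⟩ := hrep x hx
  calc ENNReal.ofReal |f x| ≤ ENNReal.ofReal (∫ p, |S.neuron x p| ∂ρ) := by
        refine ENNReal.ofReal_le_ofReal ?_
        rw [heq]
        simpa [Real.norm_eq_abs] using norm_integral_le_integral_norm (μ := ρ) (S.neuron x)
    _ = ∫⁻ p, ENNReal.ofReal |S.neuron x p| ∂ρ :=
        ofReal_integral_eq_lintegral_ofReal hint.abs
          (Filter.Eventually.of_forall fun p => abs_nonneg _)
    _ ≤ ∫⁻ p, ENNReal.ofReal (S.weight p) ∂ρ := by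
        refine lintegral_mono_ae ?_
        filter_upwards [S.ae_mem_W hbad] with p hp
        exact ENNReal.ofReal_le_ofReal (S.abs_neuron_le_weight hx hp)
    _ = S.cost ρ := rfl

lemma barron_smul_le (f : Vec N → ℝ) {α : ℝ} (hα : α ≠ 0) :
    S.barron (fun x => α * f x) ≤ ENNReal.ofReal |α| * S.barron f := by
  set s : ℝ := if 0 ≤ α then 1 else -1 with hs_def
  have hs : s = 1 ∨ s = -1 := by by_cases h : 0 ≤ α <;> simp [hs_def, h]
  have hst : s * |α| = α := by
    by_cases h : 0 ≤ α
    · simp [hs_def, h, abs_of_nonneg h]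
    · push_neg at h
      simp [hs_def, not_le.2 h, abs_of_neg h]
  have ht : 0 < |α| := abs_pos.2 hα
  have hne : ENNReal.ofReal |α| ≠ 0 := by
    simp only [ne_eq, ENNReal.ofReal_eq_zero, not_le]
    exact ht
  rw [mul_comm, ← ENNReal.div_le_iff_le_mul (Or.inl hne) (Or.inl ENNReal.ofReal_ne_top)]
  rw [barron]
  refine le_iInf₂ fun ρ hρ => ?_
  rw [ENNReal.div_le_iff_le_mul (Or.inl hne) (Or.inl ENNReal.ofReal_ne_top)]
  obtain ⟨hmem, hcost⟩ := S.map_smap_mem_reps hρ hs ht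
  have hfun : (fun x => (s * |α|) * f x) = fun x => α * f x := by
    funext x; rw [hst]
  rw [hfun] at hmem
  calc S.barron (fun x => α * f x) ≤ S.cost (Measure.map (smap s |α|) ρ) := iInf₂_le _ hmem
    _ ≤ ENNReal.ofReal |α| * S.cost ρ := hcost
    _ = S.cost ρ * ENNReal.ofReal |α| := mul_comm _ _

end Setting

/-- `‖·‖_{B_1}` is a norm on the Barron space `B_1`. -/
theorem barron_norm_properties {N : ℕ} (S : Setting N) :
    (∀ f : Vec N → ℝ, S.memB f → (S.barron f = 0 ↔ ∀ x ∈ S.dom, f x = 0)) ∧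
    (∀ (f : Vec N → ℝ) (α : ℝ), S.memB f →
      S.barron (fun x => α * f x) = ENNReal.ofReal |α| * S.barron f) ∧
    (∀ f g : Vec N → ℝ, S.memB f → S.memB g →
      S.barron (f + g) ≤ S.barron f + S.barron g) := by
  refine ⟨fun f _ => ⟨fun h0 x hx => ?_, fun h => S.barron_eq_zero_of h⟩,
    fun f α _ => ?_, fun f g _ _ => ?_⟩
  · -- (i) forward
    have hle : ENNReal.ofReal |f x| ≤ S.barron f := by
      rw [Setting.barron]
      exact le_iInf₂ fun ρ hρ => S.ofReal_abs_le_cost hρ hx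
    rw [h0, le_zero_iff, ENNReal.ofReal_eq_zero] at hle
    exact abs_nonpos_iff.mp hle
  · -- (ii) homogeneity
    rcases eq_or_ne α 0 with rfl | hα
    · rw [S.barron_eq_zero_of (f := fun x => (0:ℝ) * f x) (fun x _ => zero_mul _)]
      simp
    · refine le_antisymm (S.barron_smul_le f hα) ?_
      have h2 := S.barron_smul_le (fun x => α * f x) (inv_ne_zero hα)
      have hfun : (fun x => α⁻¹ * (α * f x)) = f := by
        funext x; field_simp
      rw [hfun] at h2
      calc ENNReal.ofReal |α| * S.barron f
          ≤ ENNReal.ofReal |α| * (ENNReal.ofReal |α⁻¹| * S.barron (fun x => α * f x)) :=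
            mul_le_mul_right h2 _
        _ = (ENNReal.ofReal |α| * ENNReal.ofReal |α⁻¹|) * S.barron (fun x => α * f x) :=
            (mul_assoc _ _ _).symm
        _ = S.barron (fun x => α * f x) := by
            rw [← ENNReal.ofReal_mul (abs_nonneg α), ← abs_mul, mul_inv_cancel₀ hα,
              abs_one, ENNReal.ofReal_one, one_mul]
  · -- (iii) triangle inequality
    have key : ∀ ρf ∈ S.reps f, ∀ ρg ∈ S.reps g,
        S.barron (f + g) ≤ S.cost ρf + S.cost ρg := by
      intro ρf hρf ρg hρg
      obtain ⟨hmemf, hcostf⟩ := S.map_smap_mem_reps hρf (Or.inl rfl) (two_pos (α := ℝ))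
      obtain ⟨hmemg, hcostg⟩ := S.map_smap_mem_reps hρg (Or.inl rfl) (two_pos (α := ℝ))
      set μf := Measure.map (Setting.smap 1 2) ρf with hμf
      set μg := Measure.map (Setting.smap 1 2) ρg with hμg
      set μ := (2:ℝ≥0∞)⁻¹ • μf + (2:ℝ≥0∞)⁻¹ • μg with hμ
      obtain ⟨hpf, hbf, hrf⟩ := hmemf
      obtain ⟨hpg, hbg, hrg⟩ := hmemg
      have hmem : μ ∈ S.reps (f + g) := by
        refine ⟨⟨?_⟩, ?_, fun x hx => ?_⟩
        · haveI := hpf; haveI := hpg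
          simp [hμ, Measure.add_apply, Measure.smul_apply, measure_univ, smul_eq_mul,
            ENNReal.inv_two_add_inv_two]
        · simp [hμ, Measure.add_apply, Measure.smul_apply, hbf, hbg]
        · have hif2 : Integrable (S.neuron x) ((2:ℝ≥0∞)⁻¹ • μf) :=
            ((hrf x hx).1).smul_measure (by simp)
          have hig2 : Integrable (S.neuron x) ((2:ℝ≥0∞)⁻¹ • μg) :=
            ((hrg x hx).1).smul_measure (by simp)
          refine ⟨hif2.add_measure hig2, ?_⟩
          rw [hμ, integral_add_measure hif2 hig2, integral_smul_measure, integral_smul_measure,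
            ← (hrf x hx).2, ← (hrg x hx).2]
          have h2 : ((2:ℝ≥0∞)⁻¹).toReal = (2:ℝ)⁻¹ := by simp
          rw [h2]
          show f x + g x = _
          rw [smul_eq_mul, smul_eq_mul]
          ring
      have hcost : S.cost μ ≤ S.cost ρf + S.cost ρg := by
        have hceq : S.cost μ = (2:ℝ≥0∞)⁻¹ * S.cost μf + (2:ℝ≥0∞)⁻¹ * S.cost μg := by
          rw [hμ]
          show ∫⁻ p, ENNReal.ofReal (S.weight p) ∂((2:ℝ≥0∞)⁻¹ • μf + (2:ℝ≥0∞)⁻¹ • μg) = _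
          rw [lintegral_add_measure, lintegral_smul_measure, lintegral_smul_measure]
          rfl
        rw [hceq]
        have h2 : ENNReal.ofReal (2:ℝ) = 2 := by norm_num
        rw [h2] at hcostf hcostg
        calc (2:ℝ≥0∞)⁻¹ * S.cost μf + (2:ℝ≥0∞)⁻¹ * S.cost μg
            ≤ (2:ℝ≥0∞)⁻¹ * (2 * S.cost ρf) + (2:ℝ≥0∞)⁻¹ * (2 * S.cost ρg) :=
              add_le_add (mul_le_mul_right hcostf _) (mul_le_mul_right hcostg _)
          _ = S.cost ρf + S.cost ρg := by
              rw [← mul_assoc, ← mul_assoc, ENNReal.inv_mul_cancel two_ne_zero ENNReal.ofNat_ne_top,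
                one_mul, one_mul]
      exact le_trans (iInf₂_le μ hmem) hcost
    calc S.barron (f + g)
        ≤ ⨅ ρf, ⨅ _ : ρf ∈ S.reps f, ⨅ ρg, ⨅ _ : ρg ∈ S.reps g, (S.cost ρf + S.cost ρg) := by
          simp only [le_iInf_iff]
          exact fun ρf hρf ρg hρg => key ρf hρf ρg hρg
      _ = S.barron f + S.barron g := by
          rw [Setting.barron, Setting.barron]
          simp_rw [ENNReal.iInf_add, ENNReal.add_iInf]
end
end

section
/- For every 1 ≤ r ≤ ∞ the spaces B_r coincide as sets: B_r = B_1, and for every function f in this common space the norms agree: ‖f‖_{B_∞} = ‖f‖_{B_r} = ‖f‖_{B_1}. -/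
open MeasureTheory ENNReal

noncomputable section

def Setting.costR {N : ℕ} (S : Setting N) (r : ℝ) (ρ : Measure (Param N)) : ℝ≥0∞ :=
  (∫⁻ p, ENNReal.ofReal (S.weight p) ^ r ∂ρ) ^ r⁻¹

/-- the `B_r` norm, `1 ≤ r < ∞` -/
def Setting.barronR {N : ℕ} (S : Setting N) (r : ℝ) (f : Vec N → ℝ) : ℝ≥0∞ :=
  ⨅ ρ ∈ S.reps f, S.costR r ρ

/-- topological support of a measure -/
def msupport {N : ℕ} (ρ : Measure (Param N)) : Set (Param N) :=
  {p | ∀ u ∈ nhds p, ρ u ≠ 0}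

def Setting.costInf {N : ℕ} (S : Setting N) (ρ : Measure (Param N)) : ℝ≥0∞ :=
  ⨆ p ∈ msupport ρ, ENNReal.ofReal (S.weight p)

/-- the `B_∞` norm: infimum over representing measures with bounded support of the
supremum of the weight over the support -/
def Setting.barronInf {N : ℕ} (S : Setting N) (f : Vec N → ℝ) : ℝ≥0∞ :=
  ⨅ ρ ∈ {ρ ∈ S.reps f | Bornology.IsBounded (msupport ρ)}, S.costInf ρ


section Aux

variable {N : ℕ} (S : Setting N)

/-- type synonym of `Vec N` carrying the norm `S.nrm` -/
def Syn1 (N : ℕ) : Type := Vec N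

/-- type synonym of `↥S.W` carrying the norm `S.conorm` -/
def Syn2 (S : Setting N) : Type := ↥S.W

/-- the identity map from the synonym -/
def toW {S : Setting N} (b : Syn2 S) : ↥S.W := b

lemma nrm_zero' : S.nrm 0 = 0 := (S.nrm_eq_zero 0).2 rfl

lemma nrm_neg' (x : Vec N) : S.nrm (-x) = S.nrm x := by
  simpa using S.nrm_smul (-1) x

lemma nrm_nonneg' (x : Vec N) : 0 ≤ S.nrm x := by
  have h := S.nrm_add x (-x)
  rw [add_neg_cancel, nrm_zero', nrm_neg'] at h
  linarith

lemma conorm_zero' : S.conorm 0 = 0 := (S.conorm_eq_zero 0 S.W.zero_mem).2 rfl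

lemma conorm_neg' (b : Vec N) (hb : b ∈ S.W) : S.conorm (-b) = S.conorm b := by
  simpa using S.conorm_smul (-1) b hb

lemma conorm_nonneg' (b : Vec N) (hb : b ∈ S.W) : 0 ≤ S.conorm b := by
  have h := S.conorm_add b (-b) hb (S.W.neg_mem hb)
  rw [add_neg_cancel, conorm_zero', conorm_neg' S b hb] at h
  linarith

/-- All the norm-equivalence facts packaged together. -/
lemma pack : ∃ (K : ℝ) (cw : Vec N → ℝ), 0 < K ∧ Continuous S.nrm ∧ Continuous cw ∧
    (∀ b ∈ S.W, cw b = S.conorm b) ∧ (∀ b, 0 ≤ cw b) ∧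
    (∀ x, S.nrm x ≤ K * ‖x‖) ∧ (∀ x, ‖x‖ ≤ K * S.nrm x) ∧
    (∀ b ∈ S.W, ‖b‖ ≤ K * S.conorm b) := by
  letI : AddCommGroup (Syn1 N) := inferInstanceAs (AddCommGroup (Vec N))
  letI : Module ℝ (Syn1 N) := inferInstanceAs (Module ℝ (Vec N))
  letI : Norm (Syn1 N) := ⟨S.nrm⟩
  have core1 : NormedSpace.Core ℝ (Syn1 N) :=
    { norm_nonneg := nrm_nonneg' S
      norm_smul := fun c x => by rw [Real.norm_eq_abs]; exact S.nrm_smul c x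
      norm_triangle := S.nrm_add
      norm_eq_zero_iff := S.nrm_eq_zero }
  letI : NormedAddCommGroup (Syn1 N) := NormedAddCommGroup.ofCore core1
  letI : NormedSpace ℝ (Syn1 N) := NormedSpace.ofCore core1
  haveI : FiniteDimensional ℝ (Syn1 N) := inferInstanceAs (FiniteDimensional ℝ (Vec N))
  letI : AddCommGroup (Syn2 S) := inferInstanceAs (AddCommGroup ↥S.W)
  letI : Module ℝ (Syn2 S) := inferInstanceAs (Module ℝ ↥S.W)
  letI : Norm (Syn2 S) := ⟨fun b => S.conorm (toW b).1⟩
  have core2 : NormedSpace.Core ℝ (Syn2 S) :=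
    { norm_nonneg := fun b => conorm_nonneg' S _ (toW b).2
      norm_smul := fun c b => by
        rw [Real.norm_eq_abs]; exact S.conorm_smul c (toW b).1
          (toW b).2
      norm_triangle := fun b b' => S.conorm_add _ _ (toW b).2
        (toW b').2
      norm_eq_zero_iff := fun b => by
        show S.conorm (toW b).1 = 0 ↔ b = 0
        rw [S.conorm_eq_zero _ (toW b).2]
        exact ⟨fun h => Subtype.ext h, fun h => by rw [h]; rfl⟩ }
  letI : NormedAddCommGroup (Syn2 S) := NormedAddCommGroup.ofCore core2
  letI : NormedSpace ℝ (Syn2 S) := NormedSpace.ofCore core2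
  haveI : FiniteDimensional ℝ (Syn2 S) := inferInstanceAs (FiniteDimensional ℝ ↥S.W)
  -- identity maps
  let e1 : Vec N →ₗ[ℝ] Syn1 N :=
    { toFun := fun x => x, map_add' := fun _ _ => rfl, map_smul' := fun _ _ => rfl }
  let e2 : Syn1 N →ₗ[ℝ] Vec N :=
    { toFun := fun x => x, map_add' := fun _ _ => rfl, map_smul' := fun _ _ => rfl }
  let e3 : Syn2 S →ₗ[ℝ] Vec N :=
    { toFun := fun b => (toW b).1, map_add' := fun _ _ => rfl,
      map_smul' := fun _ _ => rfl }
  obtain ⟨Wc, hWc⟩ := Submodule.exists_isCompl S.W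
  let pr : Vec N →ₗ[ℝ] Syn2 S := S.W.linearProjOfIsCompl Wc hWc
  have h1 : Continuous e1 := e1.continuous_of_finiteDimensional
  have h2 : Continuous e2 := e2.continuous_of_finiteDimensional
  have h3 : Continuous e3 := e3.continuous_of_finiteDimensional
  have hpr : Continuous pr := pr.continuous_of_finiteDimensional
  let f1 : Vec N →L[ℝ] Syn1 N := ⟨e1, h1⟩
  let f2 : Syn1 N →L[ℝ] Vec N := ⟨e2, h2⟩
  let f3 : Syn2 S →L[ℝ] Vec N := ⟨e3, h3⟩
  refine ⟨‖f1‖ + ‖f2‖ + ‖f3‖ + 1, fun b => S.conorm (toW (pr b)).1, ?_, ?_, ?_, ?_, ?_, ?_, ?_, ?_⟩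
  · positivity
  · exact h1.norm
  · exact hpr.norm
  · intro b hb
    have hpb : toW (pr b) = ⟨b, hb⟩ := Submodule.linearProjOfIsCompl_apply_left hWc ⟨b, hb⟩
    show S.conorm (toW (pr b)).1 = S.conorm b
    rw [hpb]
  · intro b
    exact conorm_nonneg' S _ (toW (pr b)).2
  · intro x
    have h : S.nrm x ≤ ‖f1‖ * ‖x‖ := f1.le_opNorm x
    nlinarith [norm_nonneg f2, norm_nonneg f3, norm_nonneg x]
  · intro x
    have h : ‖f2 x‖ ≤ ‖f2‖ * S.nrm x := f2.le_opNorm x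
    have h2 : ‖f2 x‖ = ‖x‖ := rfl
    rw [h2] at h
    nlinarith [norm_nonneg f1, norm_nonneg f3, nrm_nonneg' S x]
  · intro b hb
    have h : ‖f3 ⟨b, hb⟩‖ ≤ ‖f3‖ * S.conorm b := f3.le_opNorm ⟨b, hb⟩
    have h2 : ‖f3 ⟨b, hb⟩‖ = ‖b‖ := rfl
    rw [h2] at h
    nlinarith [norm_nonneg f1, norm_nonneg f2, conorm_nonneg' S b hb]

end Aux


section Dual

variable {N : ℕ} (S : Setting N) {K : ℝ}

lemma dual_sum_bound (hKd : ∀ x : Vec N, ‖x‖ ≤ K * S.nrm x) (hK0 : 0 ≤ K)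
    (a x : Vec N) (hx : S.nrm x ≤ 1) : ∑ i, a i * x i ≤ (∑ i, |a i|) * K := by
  have hxK : ‖x‖ ≤ K := le_trans (hKd x) (by nlinarith)
  calc ∑ i, a i * x i ≤ ∑ i, |a i| * K := by
        refine Finset.sum_le_sum fun i _ => ?_
        have h1 : a i * x i ≤ |a i| * |x i| := le_trans (le_abs_self _) (by rw [abs_mul])
        have h2 : |x i| ≤ K := le_trans (norm_le_pi_norm x i) hxK
        nlinarith [abs_nonneg (a i), abs_nonneg (x i)]
    _ = (∑ i, |a i|) * K := by rw [Finset.sum_mul]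

lemma zero_mem_dset (a : Vec N) :
    (0:ℝ) ∈ {t : ℝ | ∃ x : Vec N, S.nrm x ≤ 1 ∧ t = ∑ i, a i * x i} :=
  ⟨0, by rw [nrm_zero']; norm_num, by simp⟩

lemma dual_bddAbove (hKd : ∀ x : Vec N, ‖x‖ ≤ K * S.nrm x) (hK0 : 0 ≤ K) (a : Vec N) :
    BddAbove {t : ℝ | ∃ x : Vec N, S.nrm x ≤ 1 ∧ t = ∑ i, a i * x i} := by
  refine ⟨(∑ i, |a i|) * K, ?_⟩
  rintro t ⟨x, hx, rfl⟩
  exact dual_sum_bound S hKd hK0 a x hx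

lemma le_dual (hKd : ∀ x : Vec N, ‖x‖ ≤ K * S.nrm x) (hK0 : 0 ≤ K)
    (a x : Vec N) (hx : S.nrm x ≤ 1) : ∑ i, a i * x i ≤ S.dual a :=
  le_csSup (dual_bddAbove S hKd hK0 a) ⟨x, hx, rfl⟩

lemma dual_nonneg (hKd : ∀ x : Vec N, ‖x‖ ≤ K * S.nrm x) (hK0 : 0 ≤ K) (a : Vec N) :
    0 ≤ S.dual a :=
  le_csSup (dual_bddAbove S hKd hK0 a) (zero_mem_dset S a)

lemma dual_le (hKd : ∀ x : Vec N, ‖x‖ ≤ K * S.nrm x) (hK0 : 0 ≤ K) (a : Vec N) :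
    S.dual a ≤ (∑ i, |a i|) * K := by
  refine csSup_le ⟨0, zero_mem_dset S a⟩ ?_
  rintro t ⟨x, hx, rfl⟩
  exact dual_sum_bound S hKd hK0 a x hx

lemma mul_le_dual (hKd : ∀ x : Vec N, ‖x‖ ≤ K * S.nrm x) (hK0 : 0 ≤ K)
    (a y : Vec N) : ∑ i, a i * y i ≤ S.dual a * S.nrm y := by
  by_cases hy : y = 0
  · subst hy
    simp [nrm_zero']
  · have hn : 0 < S.nrm y :=
      lt_of_le_of_ne (nrm_nonneg' S y) (fun h => hy ((S.nrm_eq_zero y).1 h.symm))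
    have hx : S.nrm ((S.nrm y)⁻¹ • y) ≤ 1 := by
      rw [S.nrm_smul, abs_of_nonneg (inv_nonneg.2 hn.le), inv_mul_cancel₀ hn.ne']
    have h := le_dual S hKd hK0 a _ hx
    have hsum : ∑ i, a i * ((S.nrm y)⁻¹ • y) i = (S.nrm y)⁻¹ * ∑ i, a i * y i := by
      rw [Finset.mul_sum]
      exact Finset.sum_congr rfl fun i _ => by
        show a i * ((S.nrm y)⁻¹ * y i) = (S.nrm y)⁻¹ * (a i * y i); ring
    rw [hsum] at h
    calc ∑ i, a i * y i = S.nrm y * ((S.nrm y)⁻¹ * ∑ i, a i * y i) := by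
          field_simp
      _ ≤ S.nrm y * S.dual a := by
          exact mul_le_mul_of_nonneg_left h hn.le
      _ = S.dual a * S.nrm y := mul_comm _ _

lemma abs_mul_le_dual (hKd : ∀ x : Vec N, ‖x‖ ≤ K * S.nrm x) (hK0 : 0 ≤ K)
    (a y : Vec N) : |∑ i, a i * y i| ≤ S.dual a * S.nrm y := by
  rw [abs_le]
  constructor
  · have h := mul_le_dual S hKd hK0 a (-y)
    rw [nrm_neg'] at h
    have : ∑ i, a i * (-y) i = -∑ i, a i * y i := by
      rw [← Finset.sum_neg_distrib]
      exact Finset.sum_congr rfl fun i _ => by show a i * (-(y i)) = -(a i * y i); ring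
    rw [this] at h
    linarith
  · exact mul_le_dual S hKd hK0 a y

lemma dual_smul_le (hKd : ∀ x : Vec N, ‖x‖ ≤ K * S.nrm x) (hK0 : 0 ≤ K)
    {t : ℝ} (ht : 0 ≤ t) (a : Vec N) : S.dual (t • a) ≤ t * S.dual a := by
  refine csSup_le ⟨0, zero_mem_dset S _⟩ ?_
  rintro u ⟨x, hx, rfl⟩
  have : ∑ i, (t • a) i * x i = t * ∑ i, a i * x i := by
    rw [Finset.mul_sum]
    exact Finset.sum_congr rfl fun i _ => by show t * a i * x i = t * (a i * x i); ring
  rw [this]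
  exact mul_le_mul_of_nonneg_left (le_dual S hKd hK0 a x hx) ht

lemma dual_smul (hKd : ∀ x : Vec N, ‖x‖ ≤ K * S.nrm x) (hK0 : 0 ≤ K)
    {t : ℝ} (ht : 0 ≤ t) (a : Vec N) : S.dual (t • a) = t * S.dual a := by
  rcases eq_or_lt_of_le ht with h0 | hpos
  · subst h0
    rw [zero_smul, zero_mul]
    refine le_antisymm ?_ (dual_nonneg S hKd hK0 0)
    have h := dual_smul_le S hKd hK0 le_rfl (0 : Vec N)
    simpa using h
  · refine le_antisymm (dual_smul_le S hKd hK0 ht a) ?_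
    have h := dual_smul_le S hKd hK0 (inv_nonneg.2 ht) (t • a)
    rw [smul_smul, inv_mul_cancel₀ hpos.ne', one_smul] at h
    calc t * S.dual a ≤ t * (t⁻¹ * S.dual (t • a)) := mul_le_mul_of_nonneg_left h ht
      _ = S.dual (t • a) := by field_simp

lemma dual_zero (hKd : ∀ x : Vec N, ‖x‖ ≤ K * S.nrm x) (hK0 : 0 ≤ K) :
    S.dual 0 = 0 := by
  have := dual_smul S hKd hK0 le_rfl (0 : Vec N)
  simpa using this

lemma dual_pos (hKd : ∀ x : Vec N, ‖x‖ ≤ K * S.nrm x) (hKu : ∀ x, S.nrm x ≤ K * ‖x‖)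
    (hK0 : 0 ≤ K) {a : Vec N} (ha : a ≠ 0) : 0 < S.dual a := by
  have hsum : 0 < ∑ i, a i * a i := by
    obtain ⟨i, hi⟩ := Function.ne_iff.1 ha
    refine Finset.sum_pos' (fun j _ => mul_self_nonneg _) ⟨i, Finset.mem_univ i, ?_⟩
    exact mul_self_pos.2 hi
  have h := mul_le_dual S hKd hK0 a a
  have hn : 0 < S.nrm a :=
    lt_of_le_of_ne (nrm_nonneg' S a) (fun h => ha ((S.nrm_eq_zero a).1 h.symm))
  have hd := dual_nonneg S hKd hK0 a
  nlinarith

lemma norm_le_dual (hKd : ∀ x : Vec N, ‖x‖ ≤ K * S.nrm x) (hKu : ∀ x, S.nrm x ≤ K * ‖x‖)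
    (hK0 : 0 ≤ K) (a : Vec N) : ‖a‖ ≤ K * S.dual a := by
  have hd := dual_nonneg S hKd hK0 a
  rw [pi_norm_le_iff_of_nonneg (by positivity)]
  intro i
  have hsingle : ‖(Pi.single i 1 : Vec N)‖ ≤ 1 := by
    rw [pi_norm_le_iff_of_nonneg zero_le_one]
    intro j
    rw [Real.norm_eq_abs]
    by_cases h : j = i
    · subst h; rw [Pi.single_eq_same]; norm_num
    · rw [Pi.single_eq_of_ne h]; norm_num
  have hnrm : S.nrm (Pi.single i 1) ≤ K := le_trans (hKu _) (by nlinarith)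
  have h := abs_mul_le_dual S hKd hK0 a (Pi.single i 1)
  have hsum : ∑ j, a j * (Pi.single i 1 : Vec N) j = a i := by
    rw [Finset.sum_eq_single i]
    · rw [Pi.single_eq_same, mul_one]
    · intro j _ hj; rw [Pi.single_eq_of_ne hj, mul_zero]
    · intro h; exact absurd (Finset.mem_univ i) h
  rw [hsum] at h
  rw [Real.norm_eq_abs]
  calc |a i| ≤ S.dual a * S.nrm (Pi.single i 1) := h
    _ ≤ K * S.dual a := by nlinarith

lemma dual_sub_le (hKd : ∀ x : Vec N, ‖x‖ ≤ K * S.nrm x) (hK0 : 0 ≤ K)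
    (a b : Vec N) : S.dual a ≤ S.dual (a - b) + S.dual b := by
  refine csSup_le ⟨0, zero_mem_dset S _⟩ ?_
  rintro t ⟨x, hx, rfl⟩
  have : ∑ i, a i * x i = (∑ i, (a - b) i * x i) + ∑ i, b i * x i := by
    rw [← Finset.sum_add_distrib]
    exact Finset.sum_congr rfl fun i _ => by
      show a i * x i = (a i - b i) * x i + b i * x i; ring
  rw [this]
  exact add_le_add (le_dual S hKd hK0 _ x hx) (le_dual S hKd hK0 _ x hx)

lemma dual_continuous (hKd : ∀ x : Vec N, ‖x‖ ≤ K * S.nrm x) (hK0 : 0 ≤ K) :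
    Continuous S.dual := by
  have key : ∀ a b : Vec N, S.dual a - S.dual b ≤ (N * K) * ‖a - b‖ := by
    intro a b
    have h1 := dual_sub_le S hKd hK0 a b
    have h2 : S.dual (a - b) ≤ (∑ i, |(a - b) i|) * K := dual_le S hKd hK0 _
    have h3 : ∑ i, |(a - b) i| ≤ (N : ℝ) * ‖a - b‖ := by
      calc ∑ i, |(a - b) i| ≤ ∑ _i : Fin N, ‖a - b‖ :=
            Finset.sum_le_sum fun i _ => by
              rw [← Real.norm_eq_abs]; exact norm_le_pi_norm _ i
        _ = (N : ℝ) * ‖a - b‖ := by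
            rw [Finset.sum_const, Finset.card_univ, Fintype.card_fin, nsmul_eq_mul]
    nlinarith [norm_nonneg (a - b)]
  have lip : LipschitzWith (Real.toNNReal (N * K)) S.dual := by
    refine LipschitzWith.of_dist_le_mul fun a b => ?_
    rw [Real.dist_eq, dist_eq_norm]
    rw [Real.coe_toNNReal _ (by positivity)]
    rw [abs_le]
    constructor
    · have := key b a
      rw [norm_sub_rev] at this
      linarith
    · linarith [key a b]
  exact lip.continuous

end Dual

section Neuron

variable {N : ℕ} (S : Setting N) {K : ℝ}

lemma conv_zero' (x : Vec N) : conv S.U 0 x = 0 := by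
  simp [conv]

lemma conv_add' (b b' x : Vec N) : conv S.U (b + b') x = conv S.U b x + conv S.U b' x := by
  simp [conv, Matrix.mulVec_add, add_mul]

lemma conv_smul' (t : ℝ) (b x : Vec N) : conv S.U (t • b) x = t • conv S.U b x := by
  simp [conv, Matrix.mulVec_smul, smul_mul_assoc]

lemma relu_smul' {t : ℝ} (ht : 0 ≤ t) (x : Vec N) : relu (t • x) = t • relu x := by
  funext i
  show max (t * x i) 0 = t * max (x i) 0
  rw [mul_max_of_nonneg _ _ ht, mul_zero]

lemma relu_zero' : relu (0 : Vec N) = 0 := by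
  funext i
  show max 0 0 = (0:ℝ)
  simp

lemma neuron_smul_a (x : Vec N) (t : ℝ) (a b c : Vec N) :
    S.neuron x (t • a, b, c) = t * S.neuron x (a, b, c) := by
  unfold Setting.neuron
  rw [Finset.mul_sum]
  exact Finset.sum_congr rfl fun i _ => by
    show t * a i * _ = t * (a i * _); ring

lemma neuron_smul_bc (x : Vec N) {t : ℝ} (ht : 0 ≤ t) (a b c : Vec N) :
    S.neuron x (a, t • b, t • c) = t * S.neuron x (a, b, c) := by
  unfold Setting.neuron
  have h : conv S.U (t • b) x + t • c = t • (conv S.U b x + c) := by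
    rw [conv_smul', smul_add]
  rw [h, relu_smul' ht]
  rw [Finset.mul_sum]
  exact Finset.sum_congr rfl fun i _ => by
    show a i * (t * _) = t * (a i * _); ring

lemma neuron_zero_param (x : Vec N) : S.neuron x 0 = 0 := by
  unfold Setting.neuron
  simp

lemma neuron_continuous (x : Vec N) : Continuous fun p : Param N => S.neuron x p := by
  let cL : Vec N →ₗ[ℝ] Vec N :=
    { toFun := fun b => conv S.U b x
      map_add' := fun b b' => conv_add' S b b' x
      map_smul' := fun t b => conv_smul' S t b x }
  have hc : Continuous cL := cL.continuous_of_finiteDimensional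
  have hbc : Continuous fun p : Param N => conv S.U p.2.1 x + p.2.2 := by
    exact (hc.comp (continuous_fst.comp continuous_snd)).add
      (continuous_snd.comp continuous_snd)
  unfold Setting.neuron
  refine continuous_finset_sum _ fun i _ => ?_
  exact ((continuous_apply i).comp continuous_fst).mul
    (((continuous_apply i).comp hbc).max continuous_const)

lemma neuron_abs_le (hKd : ∀ x : Vec N, ‖x‖ ≤ K * S.nrm x) (hK0 : 0 ≤ K)
    {x : Vec N} (hx : x ∈ S.dom) {p : Param N} (hb : p.2.1 ∈ S.W) :
    |S.neuron x p| ≤ S.weight p := by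
  obtain ⟨a, b, c⟩ := p
  have h1 : |S.neuron x (a, b, c)| ≤ S.dual a * S.nrm (relu (conv S.U b x + c)) :=
    abs_mul_le_dual S hKd hK0 a _
  have h2 : S.nrm (relu (conv S.U b x + c)) ≤ S.conorm b + S.nrm c :=
    le_trans (S.relu_nrm_le _) (le_trans (S.nrm_add _ _)
      (add_le_add (S.conv_nrm_le b hb x hx) le_rfl))
  have h3 := dual_nonneg S hKd hK0 a
  calc |S.neuron x (a, b, c)| ≤ S.dual a * S.nrm (relu (conv S.U b x + c)) := h1
    _ ≤ S.dual a * (S.conorm b + S.nrm c) := mul_le_mul_of_nonneg_left h2 h3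
    _ = S.weight (a, b, c) := rfl

lemma weight_nonneg' (hKd : ∀ x : Vec N, ‖x‖ ≤ K * S.nrm x) (hK0 : 0 ≤ K)
    {p : Param N} (hb : p.2.1 ∈ S.W) : 0 ≤ S.weight p :=
  mul_nonneg (dual_nonneg S hKd hK0 _)
    (add_nonneg (conorm_nonneg' S _ hb) (nrm_nonneg' S _))

lemma neuron_eq_zero_of_weight_eq_zero
    (hKd : ∀ x : Vec N, ‖x‖ ≤ K * S.nrm x) (hKu : ∀ x, S.nrm x ≤ K * ‖x‖) (hK0 : 0 ≤ K)
    {p : Param N} (hb : p.2.1 ∈ S.W) (hw : S.weight p = 0) (x : Vec N) :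
    S.neuron x p = 0 := by
  obtain ⟨a, b, c⟩ := p
  rcases mul_eq_zero.1 hw with h | h
  · have ha : a = 0 := by
      by_contra hne
      exact absurd h (dual_pos S hKd hKu hK0 hne).ne'
    subst ha
    unfold Setting.neuron
    simp
  · have hb0 : S.conorm b = 0 ∧ S.nrm c = 0 := by
      constructor <;> nlinarith [conorm_nonneg' S b hb, nrm_nonneg' S c]
    have hbz : b = 0 := (S.conorm_eq_zero b hb).1 hb0.1
    have hcz : c = 0 := (S.nrm_eq_zero c).1 hb0.2
    subst hbz; subst hcz
    unfold Setting.neuron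
    rw [conv_zero']
    simp [relu_zero']

end Neuron

section Support

variable {N : ℕ}

lemma measure_compl_msupport (ρ : Measure (Param N)) : ρ (msupport ρ)ᶜ = 0 := by
  apply measure_null_of_locally_null
  intro p hp
  simp only [msupport, Set.mem_compl_iff, Set.mem_setOf_eq, not_forall] at hp
  obtain ⟨u, hu, hρu⟩ := hp
  exact ⟨u, mem_nhdsWithin_of_mem_nhds hu, by simpa using hρu⟩

lemma ae_mem_msupport (ρ : Measure (Param N)) : ∀ᵐ p ∂ρ, p ∈ msupport ρ :=
  ae_iff.2 (measure_compl_msupport ρ)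

lemma msupport_subset {ρ : Measure (Param N)} {F : Set (Param N)} (hF : IsClosed F)
    (h0 : ρ Fᶜ = 0) : msupport ρ ⊆ F := by
  intro p hp
  by_contra h
  exact hp Fᶜ (hF.isOpen_compl.mem_nhds h) h0

end Support

section Cost

variable {N : ℕ} (S : Setting N) {K : ℝ} {cw : Vec N → ℝ}

lemma weight_ae_eq (hcw : ∀ b ∈ S.W, cw b = S.conorm b) {f : Vec N → ℝ} {ρ : Measure (Param N)}
    (hρ : ρ ∈ S.reps f) :
    (fun p : Param N => S.weight p) =ᵐ[ρ] fun p => S.dual p.1 * (cw p.2.1 + S.nrm p.2.2) := by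
  have hae : ∀ᵐ p ∂ρ, p.2.1 ∈ S.W := ae_iff.2 hρ.2.1
  filter_upwards [hae] with p hp
  unfold Setting.weight
  rw [hcw _ hp]

lemma wm_continuous (hnc : Continuous S.nrm) (hcwc : Continuous cw)
    (hKd : ∀ x : Vec N, ‖x‖ ≤ K * S.nrm x) (hK0 : 0 ≤ K) :
    Continuous fun p : Param N => S.dual p.1 * (cw p.2.1 + S.nrm p.2.2) :=
  ((dual_continuous S hKd hK0).comp continuous_fst).mul
    (((hcwc.comp (continuous_fst.comp continuous_snd))).add
      (hnc.comp (continuous_snd.comp continuous_snd)))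

lemma cost_le_costR (hnc : Continuous S.nrm) (hcwc : Continuous cw)
    (hcw : ∀ b ∈ S.W, cw b = S.conorm b)
    (hKd : ∀ x : Vec N, ‖x‖ ≤ K * S.nrm x) (hK0 : 0 ≤ K)
    {f : Vec N → ℝ} {ρ : Measure (Param N)} (hρ : ρ ∈ S.reps f)
    {r : ℝ} (hr : 1 ≤ r) : S.cost ρ ≤ S.costR r ρ := by
  haveI : IsProbabilityMeasure ρ := hρ.1
  set wm : Param N → ℝ := fun p => S.dual p.1 * (cw p.2.1 + S.nrm p.2.2) with hwm
  have hae : (fun p : Param N => ENNReal.ofReal (S.weight p)) =ᵐ[ρ]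
      fun p => ENNReal.ofReal (wm p) :=
    (weight_ae_eq S hcw hρ).mono fun p hp => by dsimp only at hp ⊢; rw [hp]
  have hg : AEMeasurable (fun p => ENNReal.ofReal (wm p)) ρ :=
    (ENNReal.measurable_ofReal.comp (wm_continuous S hnc hcwc hKd hK0).measurable).aemeasurable
  have hcost : S.cost ρ = ∫⁻ p, ENNReal.ofReal (wm p) ∂ρ := lintegral_congr_ae hae
  have hcostR : S.costR r ρ = (∫⁻ p, ENNReal.ofReal (wm p) ^ r ∂ρ) ^ r⁻¹ := by
    unfold Setting.costR
    congr 1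
    exact lintegral_congr_ae (hae.mono fun p hp => by dsimp only at hp ⊢; rw [hp])
  rw [hcost, hcostR]
  rcases eq_or_lt_of_le hr with h1 | h1
  · rw [← h1]
    simp [ENNReal.rpow_one]
  · have hpq : r.HolderConjugate r.conjExponent := Real.HolderConjugate.conjExponent h1
    have hone : AEMeasurable (fun _ : Param N => (1 : ℝ≥0∞)) ρ := aemeasurable_const
    have h := ENNReal.lintegral_mul_le_Lp_mul_Lq ρ hpq hg hone
    simp only [mul_one, ENNReal.one_rpow, lintegral_const, measure_univ, one_mul] at h
    have h2 : ∫⁻ p, ENNReal.ofReal (wm p) ∂ρ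
        ≤ (∫⁻ p, ENNReal.ofReal (wm p) ^ r ∂ρ) ^ (1 / r) := by
      refine le_trans (le_of_eq ?_) h
      exact lintegral_congr fun p => by simp
    rw [one_div] at h2
    exact h2

lemma cost_le_costInf {f : Vec N → ℝ} {ρ : Measure (Param N)} (hρ : ρ ∈ S.reps f) :
    S.cost ρ ≤ S.costInf ρ := by
  haveI : IsProbabilityMeasure ρ := hρ.1
  have hae : ∀ᵐ p ∂ρ, ENNReal.ofReal (S.weight p) ≤ S.costInf ρ := by
    filter_upwards [ae_mem_msupport ρ] with p hp
    exact le_iSup₂ (f := fun (p : Param N) (_ : p ∈ msupport ρ) =>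
      ENNReal.ofReal (S.weight p)) p hp
  calc S.cost ρ ≤ ∫⁻ _, S.costInf ρ ∂ρ := lintegral_mono_ae hae
    _ = S.costInf ρ := by rw [lintegral_const, measure_univ, mul_one]

end Cost

section Construct

variable {N : ℕ} (S : Setting N) {K : ℝ} {cw : Vec N → ℝ}

lemma exists_good_rep
    (hnc : Continuous S.nrm) (hcwc : Continuous cw)
    (hcw : ∀ b ∈ S.W, cw b = S.conorm b) (hcw0 : ∀ b, 0 ≤ cw b)
    (hKu : ∀ x, S.nrm x ≤ K * ‖x‖) (hKd : ∀ x : Vec N, ‖x‖ ≤ K * S.nrm x)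
    (hK0 : 0 < K) (hKW : ∀ b ∈ S.W, ‖b‖ ≤ K * S.conorm b)
    {f : Vec N → ℝ} {ρ : Measure (Param N)} (hρ : ρ ∈ S.reps f) (hC : S.cost ρ ≠ ⊤) :
    ∃ ρ' ∈ S.reps f, Bornology.IsBounded (msupport ρ') ∧ S.costInf ρ' ≤ S.cost ρ ∧
      ∀ r : ℝ, 1 ≤ r → S.costR r ρ' ≤ S.cost ρ := by
  haveI : IsProbabilityMeasure ρ := hρ.1
  have hWclosed : IsClosed (S.W : Set (Vec N)) := Submodule.closed_of_finiteDimensional S.W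
  have hWmeas : MeasurableSet {p : Param N | p.2.1 ∉ S.W} :=
    ((hWclosed.preimage (continuous_fst.comp continuous_snd)).measurableSet).compl
  have haeW : ∀ᵐ p ∂ρ, p.2.1 ∈ S.W := ae_iff.2 hρ.2.1
  set wm : Param N → ℝ := fun p => S.dual p.1 * (cw p.2.1 + S.nrm p.2.2) with hwm_def
  have hwmc : Continuous wm := wm_continuous S hnc hcwc hKd hK0.le
  have hwm0 : ∀ p, 0 ≤ wm p := fun p =>
    mul_nonneg (dual_nonneg S hKd hK0.le _) (add_nonneg (hcw0 _) (nrm_nonneg' S _))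
  have hae : (fun p : Param N => ENNReal.ofReal (S.weight p)) =ᵐ[ρ]
      fun p => ENNReal.ofReal (wm p) :=
    (weight_ae_eq S hcw hρ).mono fun p hp => by dsimp only at hp ⊢; rw [hp]
  have hlint : ∫⁻ p, ENNReal.ofReal (wm p) ∂ρ = S.cost ρ := (lintegral_congr_ae hae).symm
  by_cases hC0 : S.cost ρ = 0
  · -- trivial case: the Dirac measure at 0 represents f
    have haez : ∀ᵐ p ∂ρ, wm p = 0 := by
      have h0 : ∫⁻ p, ENNReal.ofReal (wm p) ∂ρ = 0 := by rw [hlint, hC0]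
      have := (lintegral_eq_zero_iff
        (ENNReal.measurable_ofReal.comp hwmc.measurable)).1 h0
      filter_upwards [this] with p hp
      have : ENNReal.ofReal (wm p) = 0 := hp
      have h1 := ENNReal.ofReal_eq_zero.1 this
      linarith [hwm0 p]
    have hfz : ∀ x ∈ S.dom, f x = 0 := by
      intro x hx
      rw [(hρ.2.2 x hx).2]
      refine integral_eq_zero_of_ae ?_
      filter_upwards [haez, haeW] with p hp hb
      have hwp : S.weight p = 0 := by
        unfold Setting.weight
        rw [← hcw _ hb]
        exact hp
      exact neuron_eq_zero_of_weight_eq_zero S hKd hKu hK0.le hb hwp x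
    refine ⟨Measure.dirac 0, ⟨inferInstance, ?_, ?_⟩, ?_, ?_, ?_⟩
    · rw [Measure.dirac_apply' _ hWmeas]
      refine Set.indicator_of_notMem ?_ _
      simp only [Set.mem_setOf_eq, not_not, Prod.snd_zero, Prod.fst_zero]
      exact S.W.zero_mem
    · intro x hx
      constructor
      · refine Integrable.mono' (integrable_const (0:ℝ))
          ((neuron_continuous S x).aestronglyMeasurable) ?_
        rw [ae_dirac_iff]
        · rw [Real.norm_eq_abs, neuron_zero_param]
          simp
        · exact measurableSet_le (continuous_norm.comp (neuron_continuous S x)).measurable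
            measurable_const
      · rw [integral_dirac, neuron_zero_param, hfz x hx]
    · exact (Bornology.isBounded_singleton (x := (0 : Param N))).subset
        (msupport_subset isClosed_singleton (by
          rw [Measure.dirac_apply' _ (measurableSet_singleton _).compl]
          simp))
    · refine iSup₂_le fun p hp => ?_
      have hp0 : p = 0 := msupport_subset isClosed_singleton (by
          rw [Measure.dirac_apply' _ (measurableSet_singleton _).compl]
          simp) hp
      subst hp0
      have hw0 : S.weight 0 = 0 := by
        show S.dual (0 : Vec N) * (S.conorm (0 : Vec N) + S.nrm (0 : Vec N)) = 0
        rw [dual_zero S hKd hK0.le, zero_mul]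
      rw [hw0, ENNReal.ofReal_zero]
      exact zero_le
    · intro r hr
      rw [Setting.costR, lintegral_dirac]
      have : S.weight 0 = 0 := by
        show S.dual (0 : Vec N) * (S.conorm (0 : Vec N) + S.nrm (0 : Vec N)) = 0
        rw [dual_zero S hKd hK0.le, zero_mul]
      rw [this, ENNReal.ofReal_zero, ENNReal.zero_rpow_of_pos (by linarith),
        ENNReal.zero_rpow_of_pos (by positivity)]
      exact zero_le
  · -- main case
    set C := S.cost ρ with hCdef
    set Cr := C.toReal with hCr_def
    have hCr : 0 < Cr := ENNReal.toReal_pos hC0 hC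
    have hCreq : ENNReal.ofReal Cr = C := ENNReal.ofReal_toReal hC
    set d : Param N → NNReal := fun p => Real.toNNReal (wm p / Cr) with hd_def
    have hd_meas : Measurable d := (hwmc.measurable.div_const Cr).real_toNNReal
    set μ : Measure (Param N) := ρ.withDensity (fun p => (d p : ℝ≥0∞)) with hμ_def
    have hdcoe : ∀ p, (d p : ℝ≥0∞) = ENNReal.ofReal (wm p) / ENNReal.ofReal Cr := by
      intro p
      rw [hd_def]
      show ENNReal.ofReal (wm p / Cr) = _
      rw [ENNReal.ofReal_div_of_pos hCr]
    have hμuniv : μ Set.univ = 1 := by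
      rw [hμ_def, withDensity_apply _ MeasurableSet.univ, Measure.restrict_univ]
      calc ∫⁻ p, (d p : ℝ≥0∞) ∂ρ
          = ∫⁻ p, ENNReal.ofReal (wm p) * (ENNReal.ofReal Cr)⁻¹ ∂ρ := by
            refine lintegral_congr fun p => ?_
            rw [hdcoe p, ENNReal.div_eq_inv_mul, mul_comm]
        _ = (∫⁻ p, ENNReal.ofReal (wm p) ∂ρ) * (ENNReal.ofReal Cr)⁻¹ :=
            lintegral_mul_const' _ _ (by
              simp only [ne_eq, ENNReal.inv_eq_top, ENNReal.ofReal_eq_zero, not_le]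
              exact hCr)
        _ = C * C⁻¹ := by rw [hlint, hCreq]
        _ = 1 := ENNReal.mul_inv_cancel hC0 hC
    haveI hμprob : IsProbabilityMeasure μ := ⟨hμuniv⟩
    set T : Param N → Param N := fun p =>
      if wm p = 0 then 0 else
        ((Cr / S.dual p.1) • p.1, (cw p.2.1 + S.nrm p.2.2)⁻¹ • p.2.1,
          (cw p.2.1 + S.nrm p.2.2)⁻¹ • p.2.2) with hT_def
    have hT : Measurable T := by
      refine Measurable.ite (hwmc.measurable (measurableSet_singleton 0)) measurable_const ?_
      refine Measurable.prod ?_ (Measurable.prod ?_ ?_)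
      · exact ((measurable_const.div ((dual_continuous S hKd hK0.le).measurable.comp
          measurable_fst)).smul measurable_fst)
      · exact (((hcwc.measurable.comp (measurable_fst.comp measurable_snd)).add
          (hnc.measurable.comp (measurable_snd.comp measurable_snd))).inv.smul
          (measurable_fst.comp measurable_snd))
      · exact (((hcwc.measurable.comp (measurable_fst.comp measurable_snd)).add
          (hnc.measurable.comp (measurable_snd.comp measurable_snd))).inv.smul
          (measurable_snd.comp measurable_snd))
    set ρ' : Measure (Param N) := μ.map T with hρ'_def
    haveI : IsProbabilityMeasure ρ' := Measure.isProbabilityMeasure_map hT.aemeasurable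
    set F : Set (Param N) := {p | S.dual p.1 ≤ Cr} ∩
      ({p | p.2.1 ∈ S.W} ∩ {p | cw p.2.1 + S.nrm p.2.2 ≤ 1}) with hF_def
    have hFclosed : IsClosed F := by
      refine IsClosed.inter ?_ (IsClosed.inter ?_ ?_)
      · exact isClosed_le ((dual_continuous S hKd hK0.le).comp continuous_fst)
          continuous_const
      · exact hWclosed.preimage (continuous_fst.comp continuous_snd)
      · exact isClosed_le ((hcwc.comp (continuous_fst.comp continuous_snd)).add
          (hnc.comp (continuous_snd.comp continuous_snd))) continuous_const
    have hT_mem : ∀ p : Param N, p.2.1 ∈ S.W → T p ∈ F := by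
      intro p hb
      by_cases hw : wm p = 0
      · rw [hT_def]
        simp only [if_pos hw]
        refine ⟨?_, ?_, ?_⟩
        · show S.dual 0 ≤ Cr
          rw [dual_zero S hKd hK0.le]; exact hCr.le
        · exact S.W.zero_mem
        · show cw 0 + S.nrm 0 ≤ 1
          rw [hcw 0 S.W.zero_mem, conorm_zero', nrm_zero']; norm_num
      · have hts : S.dual p.1 * (cw p.2.1 + S.nrm p.2.2) ≠ 0 := hw
        have ht : 0 < S.dual p.1 :=
          lt_of_le_of_ne (dual_nonneg S hKd hK0.le _) (fun h => hts (by rw [← h]; ring))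
        have hs : 0 < cw p.2.1 + S.nrm p.2.2 := by
          rcases lt_or_eq_of_le (add_nonneg (hcw0 p.2.1) (nrm_nonneg' S p.2.2)) with h | h
          · exact h
          · exact absurd (by rw [← h]; ring) hts
        rw [hT_def]
        simp only [if_neg hw]
        refine ⟨?_, ?_, ?_⟩
        · show S.dual ((Cr / S.dual p.1) • p.1) ≤ Cr
          rw [dual_smul S hKd hK0.le (by positivity)]
          rw [div_mul_cancel₀ _ ht.ne']
        · exact S.W.smul_mem _ hb
        · show cw ((cw p.2.1 + S.nrm p.2.2)⁻¹ • p.2.1) +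
            S.nrm ((cw p.2.1 + S.nrm p.2.2)⁻¹ • p.2.2) ≤ 1
          rw [hcw _ (S.W.smul_mem _ hb), S.conorm_smul _ _ hb, S.nrm_smul,
            abs_of_nonneg (inv_nonneg.2 hs.le), ← mul_add, ← hcw _ hb,
            inv_mul_cancel₀ hs.ne']
    have hμW : μ {p : Param N | p.2.1 ∉ S.W} = 0 :=
      (withDensity_absolutelyContinuous ρ _) hρ.2.1
    have hρ'F : ρ' Fᶜ = 0 := by
      rw [hρ'_def, Measure.map_apply hT hFclosed.measurableSet.compl]
      refine measure_mono_null ?_ hμW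
      intro p hp
      simp only [Set.mem_preimage, Set.mem_compl_iff] at hp
      intro hb
      exact hp (hT_mem p hb)
    have hFw : ∀ p ∈ F, S.weight p ≤ Cr := by
      rintro p ⟨h1, h2, h3⟩
      simp only [Set.mem_setOf_eq] at h1 h2 h3
      unfold Setting.weight
      rw [← hcw _ h2]
      have := hcw0 p.2.1
      have := nrm_nonneg' S p.2.2
      have := dual_nonneg S hKd hK0.le p.1
      nlinarith
    have hFw' : ∀ p ∈ F, ENNReal.ofReal (S.weight p) ≤ C := fun p hp => by
      rw [← hCreq]; exact ENNReal.ofReal_le_ofReal (hFw p hp)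
    have hFbounded : Bornology.IsBounded F := by
      rw [isBounded_iff_forall_norm_le]
      refine ⟨K * Cr + K, ?_⟩
      rintro p ⟨h1, h2, h3⟩
      simp only [Set.mem_setOf_eq] at h1 h2 h3
      have hcb : S.conorm p.2.1 ≤ 1 := by
        rw [← hcw _ h2]
        have := nrm_nonneg' S p.2.2
        linarith
      have hnb : S.nrm p.2.2 ≤ 1 := by
        have := hcw0 p.2.1
        linarith
      have hb1 : ‖p.1‖ ≤ K * Cr := by
        have := norm_le_dual S hKd hKu hK0.le p.1
        nlinarith
      have hb2 : ‖p.2.1‖ ≤ K := by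
        have := hKW p.2.1 h2
        nlinarith
      have hb3 : ‖p.2.2‖ ≤ K := by
        have := hKd p.2.2
        nlinarith
      rw [Prod.norm_def, Prod.norm_def, max_le_iff, max_le_iff]
      have hKCr : (0:ℝ) ≤ K * Cr := by positivity
      exact ⟨by linarith, by linarith, by linarith⟩
    have hae_mem : ∀ᵐ p ∂ρ', p ∈ F := ae_iff.2 hρ'F
    refine ⟨ρ', ⟨inferInstance, ?_, ?_⟩, ?_, ?_, ?_⟩
    · refine measure_mono_null ?_ hρ'F
      intro p hp hpF
      exact hp hpF.2.1
    · intro x hx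
      have hsm : AEStronglyMeasurable (S.neuron x) ρ' :=
        (neuron_continuous S x).aestronglyMeasurable
      have hbound : ∀ᵐ p ∂ρ', ‖S.neuron x p‖ ≤ Cr := by
        filter_upwards [hae_mem] with p hp
        rw [Real.norm_eq_abs]
        exact le_trans (neuron_abs_le S hKd hK0.le hx hp.2.1) (hFw p hp)
      constructor
      · exact Integrable.mono' (integrable_const Cr) hsm hbound
      · have key : (fun p => (d p : ℝ) • S.neuron x (T p)) =ᵐ[ρ] fun p => S.neuron x p := by
          filter_upwards [haeW] with p hb
          by_cases hw : wm p = 0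
          · have hdp : d p = 0 := by
              rw [hd_def]
              show Real.toNNReal (wm p / Cr) = 0
              rw [hw, zero_div, Real.toNNReal_zero]
            have hwp : S.weight p = 0 := by
              unfold Setting.weight
              rw [← hcw _ hb]
              exact hw
            show (d p : ℝ) • S.neuron x (T p) = S.neuron x p
            rw [hdp, neuron_eq_zero_of_weight_eq_zero S hKd hKu hK0.le hb hwp x]
            simp
          · have hts : S.dual p.1 * (cw p.2.1 + S.nrm p.2.2) ≠ 0 := hw
            have ht : 0 < S.dual p.1 :=
              lt_of_le_of_ne (dual_nonneg S hKd hK0.le _) (fun h => hts (by rw [← h]; ring))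
            have hs : 0 < cw p.2.1 + S.nrm p.2.2 := by
              rcases lt_or_eq_of_le (add_nonneg (hcw0 p.2.1) (nrm_nonneg' S p.2.2)) with h | h
              · exact h
              · exact absurd (by rw [← h]; ring) hts
            have hTp : T p = ((Cr / S.dual p.1) • p.1, (cw p.2.1 + S.nrm p.2.2)⁻¹ • p.2.1,
                (cw p.2.1 + S.nrm p.2.2)⁻¹ • p.2.2) := by
              rw [hT_def]; exact if_neg hw
            show (d p : ℝ) • S.neuron x (T p) = S.neuron x p
            rw [hTp, neuron_smul_a, neuron_smul_bc S x (inv_nonneg.2 hs.le)]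
            have hpe : (p.1, p.2.1, p.2.2) = p := rfl
            rw [hpe]
            have hdp : (d p : ℝ) = wm p / Cr := by
              rw [hd_def]
              show ((Real.toNNReal (wm p / Cr)) : ℝ) = wm p / Cr
              rw [Real.coe_toNNReal _ (by positivity)]
            rw [hdp, smul_eq_mul, hwm_def]
            field_simp
        calc f x = ∫ p, S.neuron x p ∂ρ := (hρ.2.2 x hx).2
          _ = ∫ p, (d p : ℝ) • S.neuron x (T p) ∂ρ := (integral_congr_ae key).symm
          _ = ∫ p, S.neuron x (T p) ∂μ := by
              rw [hμ_def, integral_withDensity_eq_integral_smul hd_meas]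
              rfl
          _ = ∫ p, S.neuron x p ∂ρ' := (integral_map hT.aemeasurable hsm).symm
    · exact hFbounded.subset (msupport_subset hFclosed hρ'F)
    · exact iSup₂_le fun p hp => hFw' p (msupport_subset hFclosed hρ'F hp)
    · intro r hr
      have hr0 : 0 < r := lt_of_lt_of_le zero_lt_one hr
      have hlin : ∫⁻ p, ENNReal.ofReal (S.weight p) ^ r ∂ρ' ≤ C ^ r := by
        calc ∫⁻ p, ENNReal.ofReal (S.weight p) ^ r ∂ρ'
            ≤ ∫⁻ _, C ^ r ∂ρ' := lintegral_mono_ae (hae_mem.mono fun p hp =>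
              ENNReal.rpow_le_rpow (hFw' p hp) hr0.le)
          _ = C ^ r := by rw [lintegral_const, measure_univ, mul_one]
      calc S.costR r ρ' ≤ (C ^ r) ^ r⁻¹ := ENNReal.rpow_le_rpow hlin (by positivity)
        _ = C := by
            rw [← ENNReal.rpow_mul, mul_inv_cancel₀ hr0.ne', ENNReal.rpow_one]

end Construct

/-- the spaces `B_r`, `1 ≤ r ≤ ∞`, coincide with `B_1` and the norms agree. -/
theorem barron_r_spaces_coincide {N : ℕ} (S : Setting N) :
    (∀ r : ℝ, 1 ≤ r → ∀ f : Vec N → ℝ,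
      (((S.reps f).Nonempty ∧ S.barronR r f < ⊤) ↔ S.memB f)) ∧
    (∀ f : Vec N → ℝ,
      ((∃ ρ ∈ S.reps f, Bornology.IsBounded (msupport ρ)) ∧ S.barronInf f < ⊤) ↔ S.memB f) ∧
    (∀ f : Vec N → ℝ, S.memB f →
      (∀ r : ℝ, 1 ≤ r → S.barronR r f = S.barron f) ∧ S.barronInf f = S.barron f) := by
  obtain ⟨K, cw, hK0, hnc, hcwc, hcw, hcw0, hKu, hKd, hKW⟩ := pack S
  -- easy directions
  have hA : ∀ (r : ℝ), 1 ≤ r → ∀ f : Vec N → ℝ, S.barron f ≤ S.barronR r f := by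
    intro r hr f
    exact le_iInf₂ fun ρ hρ => le_trans (iInf₂_le ρ hρ)
      (cost_le_costR S hnc hcwc hcw hKd hK0.le hρ hr)
  have hB : ∀ f : Vec N → ℝ, S.barron f ≤ S.barronInf f := by
    intro f
    exact le_iInf₂ fun ρ hρ => le_trans (iInf₂_le ρ hρ.1) (cost_le_costInf S hρ.1)
  -- hard directions via the rescaling construction
  have hC : ∀ (f : Vec N → ℝ) (ρ : Measure (Param N)), ρ ∈ S.reps f → S.cost ρ ≠ ⊤ →
      ∃ ρ' ∈ S.reps f, Bornology.IsBounded (msupport ρ') ∧ S.costInf ρ' ≤ S.cost ρ ∧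
        ∀ r : ℝ, 1 ≤ r → S.costR r ρ' ≤ S.cost ρ := fun f ρ hρ hc =>
    exists_good_rep S hnc hcwc hcw hcw0 hKu hKd hK0 hKW hρ hc
  have hR_le : ∀ (r : ℝ), 1 ≤ r → ∀ f : Vec N → ℝ, S.barronR r f ≤ S.barron f := by
    intro r hr f
    refine le_iInf₂ fun ρ hρ => ?_
    by_cases hc : S.cost ρ = ⊤
    · rw [hc]; exact le_top
    · obtain ⟨ρ', hρ', _, _, hRr⟩ := hC f ρ hρ hc
      exact le_trans (iInf₂_le ρ' hρ') (hRr r hr)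
  have hI_le : ∀ f : Vec N → ℝ, S.barronInf f ≤ S.barron f := by
    intro f
    refine le_iInf₂ fun ρ hρ => ?_
    by_cases hc : S.cost ρ = ⊤
    · rw [hc]; exact le_top
    · obtain ⟨ρ', hρ', hbdd, hinf, _⟩ := hC f ρ hρ hc
      exact le_trans (iInf₂_le ρ' ⟨hρ', hbdd⟩) hinf
  have eqR : ∀ (r : ℝ), 1 ≤ r → ∀ f : Vec N → ℝ, S.barronR r f = S.barron f :=
    fun r hr f => le_antisymm (hR_le r hr f) (hA r hr f)
  have eqI : ∀ f : Vec N → ℝ, S.barronInf f = S.barron f :=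
    fun f => le_antisymm (hI_le f) (hB f)
  refine ⟨?_, ?_, ?_⟩
  · intro r hr f
    constructor
    · rintro ⟨hne, hlt⟩
      exact ⟨hne, by rw [← eqR r hr f]; exact hlt⟩
    · rintro ⟨hne, hlt⟩
      exact ⟨hne, by rw [eqR r hr f]; exact hlt⟩
  · intro f
    constructor
    · rintro ⟨⟨ρ, hρ, _⟩, hlt⟩
      exact ⟨⟨ρ, hρ⟩, by rw [← eqI f]; exact hlt⟩
    · rintro ⟨hne, hlt⟩
      have hex : ∃ ρ ∈ S.reps f, S.cost ρ ≠ ⊤ := by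
        by_contra h
        push_neg at h
        have : (⊤ : ℝ≥0∞) ≤ S.barron f := le_iInf₂ fun ρ hρ => (h ρ hρ).ge
        exact absurd (lt_of_le_of_lt this hlt) (lt_irrefl _)
      obtain ⟨ρ, hρ, hc⟩ := hex
      obtain ⟨ρ', hρ', hbdd, _, _⟩ := hC f ρ hρ hc
      exact ⟨⟨ρ', hρ', hbdd⟩, by rw [eqI f]; exact hlt⟩
  · intro f _
    exact ⟨fun r hr => eqR r hr f, eqI f⟩
end
end
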